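/- arXiv:1801.00506 — 13 statements merged into one kernel-verified Lean document; each statement's English description precedes it below -/
import Mathlib

section
/- If x and y are real numbers with x < y and Q_n(x) > 0 for all n ≥ 0, then for all n ≥ 0 one has Q_n(x) Q_{n+1}(y) > Q_n(y) Q_{n+1}(x) > 0. -/
open Finset Filter

theorem stmt2 (p q r : ℕ → ℝ) (Q : ℕ → ℝ → ℝ)
    (hp : ∀ j, 0 < p j) (hq : ∀ j, 0 < q (j + 1)) (hr : ∀ j, 0 ≤ r j)
    (hq0 : q 0 = 0) (hs : ∀ j, p j + q j + r j = 1)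
    (hQ0 : ∀ x : ℝ, Q 0 x = 1) (hQ1 : ∀ x : ℝ, p 0 * Q 1 x = x - r 0)
    (hQrec : ∀ n : ℕ, ∀ x : ℝ, x * Q (n + 1) x =
      q (n + 1) * Q n x + r (n + 1) * Q (n + 1) x + p (n + 1) * Q (n + 2) x)
    (x y : ℝ) (hxy : x < y) (hx : ∀ n, 0 < Q n x) :
    ∀ n : ℕ, Q n x * Q (n + 1) y > Q n y * Q (n + 1) x ∧ Q n y * Q (n + 1) x > 0 := by
  have key : ∀ n : ℕ, 0 < Q (n + 1) y ∧
      0 < Q n x * Q (n + 1) y - Q n y * Q (n + 1) x := by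
    intro n
    induction n with
    | zero =>
      have h1 := hQ1 x
      have h2 := hQ1 y
      have hp0 := hp 0
      have hd : 0 < Q 1 y - Q 1 x := by nlinarith
      constructor
      · nlinarith [hx 1]
      · rw [hQ0 x, hQ0 y]; nlinarith
    | succ n ih =>
      obtain ⟨hy1, hW⟩ := ih
      have hrx := hQrec n x
      have hry := hQrec n y
      have hid : p (n + 1) * (Q (n + 1) x * Q (n + 2) y - Q (n + 1) y * Q (n + 2) x) =
          q (n + 1) * (Q n x * Q (n + 1) y - Q n y * Q (n + 1) x) +
          (y - x) * (Q (n + 1) x * Q (n + 1) y) := by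
        linear_combination Q (n + 1) y * hrx - Q (n + 1) x * hry
      have hW' : 0 < Q (n + 1) x * Q (n + 2) y - Q (n + 1) y * Q (n + 2) x := by
        nlinarith [hp (n + 1), hq n, hx (n + 1), mul_pos (hx (n + 1)) hy1]
      constructor
      · nlinarith [hx (n + 1), hx (n + 2), mul_pos hy1 (hx (n + 2))]
      · exact hW'
  intro n
  cases n with
  | zero =>
    obtain ⟨hy1, hW⟩ := key 0
    refine ⟨by linarith, ?_⟩
    rw [hQ0 y]
    simpa using hx 1
  | succ n =>
    obtain ⟨hy1, _⟩ := key n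
    obtain ⟨_, hW⟩ := key (n + 1)
    exact ⟨by linarith, mul_pos hy1 (hx (n + 2))⟩
end

section
/- If x is a real number with x < 1 and Q_n(x) > 0 for all n ≥ 0, then the sequence (Q_n(x))_{n≥0} is strictly decreasing: for all n ≥ 0, 0 < Q_{n+1}(x) < Q_n(x) ≤ Q_0(x) = 1. -/
open Finset Filter

theorem stmt3 (p q r : ℕ → ℝ) (Q : ℕ → ℝ → ℝ)
    (hp : ∀ j, 0 < p j) (hq : ∀ j, 0 < q (j + 1)) (hr : ∀ j, 0 ≤ r j)
    (hq0 : q 0 = 0) (hs : ∀ j, p j + q j + r j = 1)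
    (hQ0 : ∀ x : ℝ, Q 0 x = 1) (hQ1 : ∀ x : ℝ, p 0 * Q 1 x = x - r 0)
    (hQrec : ∀ n : ℕ, ∀ x : ℝ, x * Q (n + 1) x =
      q (n + 1) * Q n x + r (n + 1) * Q (n + 1) x + p (n + 1) * Q (n + 2) x)
    (x : ℝ) (hx1 : x < 1) (hx : ∀ n, 0 < Q n x) :
    Q 0 x = 1 ∧ ∀ n : ℕ, 0 < Q (n + 1) x ∧ Q (n + 1) x < Q n x ∧ Q n x ≤ 1 := by
  have key : ∀ n : ℕ, Q (n + 1) x < Q n x := by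
    intro n
    induction n with
    | zero =>
      have h1 := hQ1 x
      have hs0 := hs 0
      have hQ0x := hQ0 x
      nlinarith [hp 0]
    | succ n ih =>
      have hrec := hQrec n x
      have hsn := hs (n + 1)
      have heq : p (n + 1) * (Q (n + 2) x - Q (n + 1) x) =
          (x - 1) * Q (n + 1) x + q (n + 1) * (Q (n + 1) x - Q n x) := by
        linear_combination (-1 : ℝ) * hrec - Q (n + 1) x * hsn
      nlinarith [hp (n + 1), mul_pos (hq n) (sub_pos.mpr ih),
        mul_pos (sub_pos.mpr hx1) (hx (n + 1))]
  have hle : ∀ n : ℕ, Q n x ≤ 1 := by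
    intro n
    induction n with
    | zero => simp [hQ0 x]
    | succ n ih => exact le_of_lt (lt_of_lt_of_le (key n) ih)
  exact ⟨hQ0 x, fun n => ⟨hx _, key n, hle n⟩⟩
end

section
/- Writing Q̄_n(x) := (−1)^n Q_n(x), for all n ≥ 0 and all real x one has Q̄_{n+1}(x) = 1 + ∑_{j=0}^n (1/(p_j π_j)) ∑_{k=0}^j (2 r_k − 1 − x) π_k Q̄_k(x). -/
/-!
With `Q̄ₙ = (-1)ⁿ Qₙ`, the three-term recurrence together with the detailed balance relation
`π_{n+1} q_{n+1} = π_n p_n` makes `∑_{k ≤ n} (2 r_k - 1 - x) π_k Q̄_k(x)` telescope to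
`p_n π_n (Q̄_{n+1}(x) - Q̄_n(x))`. Dividing by `p_j π_j > 0` and summing the increments
`Q̄_{j+1} - Q̄_j` over `j ≤ n` gives the formula, since `Q̄₀ = 1`.
-/

open Finset

namespace RandomWalkPolynomial

variable {p q π : ℕ → ℝ}

theorem stationary_pos (hp : ∀ j, 0 < p j) (hq : ∀ j, 0 < q (j + 1)) (hπ0 : π 0 = 1)
    (hπ : ∀ n, π (n + 1) = π n * (p n / q (n + 1))) (n : ℕ) : 0 < π n := by
  induction n with
  | zero => rw [hπ0]; exact one_pos
  | succ n ih => rw [hπ n]; exact mul_pos ih (div_pos (hp n) (hq n))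

theorem stationary_detailed_balance (hq : ∀ j, 0 < q (j + 1))
    (hπ : ∀ n, π (n + 1) = π n * (p n / q (n + 1))) (n : ℕ) :
    π (n + 1) * q (n + 1) = π n * p n := by
  rw [hπ n]
  field_simp [(hq n).ne']

theorem sum_weighted_eq_mul_sub {r : ℕ → ℝ} {Q : ℕ → ℝ → ℝ}
    (hq0 : q 0 = 0) (hs : ∀ j, p j + q j + r j = 1)
    (hQ0 : ∀ x, Q 0 x = 1) (hQ1 : ∀ x, p 0 * Q 1 x = x - r 0)
    (hQrec : ∀ n x, x * Q (n + 1) x =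
      q (n + 1) * Q n x + r (n + 1) * Q (n + 1) x + p (n + 1) * Q (n + 2) x)
    (hπ0 : π 0 = 1) (hbal : ∀ n, π (n + 1) * q (n + 1) = π n * p n) (n : ℕ) (x : ℝ) :
    ∑ k ∈ range (n + 1), (2 * r k - 1 - x) * π k * ((-1) ^ k * Q k x) =
      p n * π n * ((-1) ^ (n + 1) * Q (n + 1) x - (-1) ^ n * Q n x) := by
  induction n with
  | zero =>
    rw [sum_range_one, hQ0, hπ0]
    linear_combination hQ1 x + hs 0 - hq0
  | succ n ih =>
    rw [sum_range_succ, ih]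
    linear_combination (-1) ^ n * π (n + 1) * hQrec n x
      + (-1) ^ n * (Q n x + Q (n + 1) x) * hbal n
      - (-1) ^ n * π (n + 1) * Q (n + 1) x * hs (n + 1)

end RandomWalkPolynomial

theorem stmt4_general (p q r : ℕ → ℝ) (Q : ℕ → ℝ → ℝ)
    (hp : ∀ j, 0 < p j) (hq : ∀ j, 0 < q (j + 1))
    (hq0 : q 0 = 0) (hs : ∀ j, p j + q j + r j = 1)
    (hQ0 : ∀ x : ℝ, Q 0 x = 1) (hQ1 : ∀ x : ℝ, p 0 * Q 1 x = x - r 0)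
    (hQrec : ∀ n : ℕ, ∀ x : ℝ, x * Q (n + 1) x =
      q (n + 1) * Q n x + r (n + 1) * Q (n + 1) x + p (n + 1) * Q (n + 2) x)
    (π : ℕ → ℝ) (hπ0 : π 0 = 1) (hπ : ∀ n, π (n + 1) = π n * (p n / q (n + 1))) :
    ∀ (n : ℕ) (x : ℝ),
      (-1 : ℝ) ^ (n + 1) * Q (n + 1) x =
        1 + ∑ j ∈ Finset.range (n + 1), (1 / (p j * π j)) *
          ∑ k ∈ Finset.range (j + 1), (2 * r k - 1 - x) * π k * ((-1 : ℝ) ^ k * Q k x) := by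
  intro n x
  have hbal := RandomWalkPolynomial.stationary_detailed_balance hq hπ
  have hincr : ∀ j, (1 / (p j * π j)) *
      ∑ k ∈ range (j + 1), (2 * r k - 1 - x) * π k * ((-1 : ℝ) ^ k * Q k x) =
        (-1) ^ (j + 1) * Q (j + 1) x - (-1) ^ j * Q j x := fun j => by
    have hpπ : p j * π j ≠ 0 :=
      (mul_pos (hp j) (RandomWalkPolynomial.stationary_pos hp hq hπ0 hπ j)).ne'
    rw [RandomWalkPolynomial.sum_weighted_eq_mul_sub hq0 hs hQ0 hQ1 hQrec hπ0 hbal j x,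
      ← mul_assoc, one_div_mul_cancel hpπ, one_mul]
  rw [sum_congr rfl fun j _ => hincr j,
    sum_range_sub (fun j => (-1 : ℝ) ^ j * Q j x), pow_zero, one_mul, hQ0]
  ring

theorem stmt4 (p q r : ℕ → ℝ) (Q : ℕ → ℝ → ℝ)
    (hp : ∀ j, 0 < p j) (hq : ∀ j, 0 < q (j + 1)) (hr : ∀ j, 0 ≤ r j)
    (hq0 : q 0 = 0) (hs : ∀ j, p j + q j + r j = 1)
    (hQ0 : ∀ x : ℝ, Q 0 x = 1) (hQ1 : ∀ x : ℝ, p 0 * Q 1 x = x - r 0)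
    (hQrec : ∀ n : ℕ, ∀ x : ℝ, x * Q (n + 1) x =
      q (n + 1) * Q n x + r (n + 1) * Q (n + 1) x + p (n + 1) * Q (n + 2) x)
    (π : ℕ → ℝ) (hπ0 : π 0 = 1) (hπ : ∀ n, π (n + 1) = π n * (p n / q (n + 1))) :
    ∀ (n : ℕ) (x : ℝ),
      (-1 : ℝ) ^ (n + 1) * Q (n + 1) x =
        1 + ∑ j ∈ Finset.range (n + 1), (1 / (p j * π j)) *
          ∑ k ∈ Finset.range (j + 1), (2 * r k - 1 - x) * π k * ((-1 : ℝ) ^ k * Q k x) :=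
  stmt4_general p q r Q hp hq hq0 hs hQ0 hQ1 hQrec π hπ0 hπ
end

section
/- For all n ≥ 0, (−1)^{n+1} Q_{n+1}(−1) = 1 + 2 ∑_{j=0}^n (1/(p_j π_j)) ∑_{k=0}^j r_k π_k (−1)^k Q_k(−1). -/
/-!
Write `S n = (-1)^n Q_n(-1)`. At `x = -1` the three-term recurrence, together with
`p + q + r = 1`, becomes `p_{n+1} ΔS_{n+1} = q_{n+1} ΔS_n + 2 r_{n+1} S_{n+1}` for the forward
differences `ΔS_n = S_{n+1} - S_n`. Multiplying by `π_{n+1}` and using detailed balance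
`q_{n+1} π_{n+1} = p_n π_n`, the flux `p_n π_n ΔS_n` increases by `2 r_{n+1} π_{n+1} S_{n+1}` at
each step, so it equals `2 ∑_{k ≤ n} r_k π_k S_k`. Dividing by `p_n π_n > 0` and summing the
differences from `S_0 = 1` gives the formula.
-/

open Finset

namespace RandomWalk

variable {p q r π : ℕ → ℝ}

theorem pi_pos (hp : ∀ j, 0 < p j) (hq : ∀ j, 0 < q (j + 1)) (hπ0 : π 0 = 1)
    (hπ : ∀ n, π (n + 1) = π n * (p n / q (n + 1))) (n : ℕ) : 0 < π n := by
  induction n with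
  | zero => rw [hπ0]; exact one_pos
  | succ k ih => rw [hπ]; exact mul_pos ih (div_pos (hp k) (hq k))

theorem q_succ_mul_pi_succ {n : ℕ} (hq : q (n + 1) ≠ 0)
    (hπ : π (n + 1) = π n * (p n / q (n + 1))) : q (n + 1) * π (n + 1) = p n * π n := by
  rw [hπ]; field_simp

theorem p_mul_pi_mul_sub_eq_sum {S : ℕ → ℝ} (hbal : ∀ n, q (n + 1) * π (n + 1) = p n * π n)
    (hπ0 : π 0 = 1) (h0 : p 0 * (S 1 - S 0) = 2 * r 0 * S 0)
    (hrec : ∀ n, p (n + 1) * (S (n + 2) - S (n + 1)) =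
      q (n + 1) * (S (n + 1) - S n) + 2 * r (n + 1) * S (n + 1)) (n : ℕ) :
    p n * π n * (S (n + 1) - S n) = 2 * ∑ k ∈ range (n + 1), r k * π k * S k := by
  induction n with
  | zero => rw [sum_range_one, hπ0]; linear_combination h0
  | succ m ih =>
    rw [sum_range_succ]
    linear_combination π (m + 1) * hrec m + (S (m + 1) - S m) * hbal m + ih

theorem p_zero_mul_sub_at_neg_one {Q : ℕ → ℝ → ℝ} (hq0 : q 0 = 0)
    (hs : p 0 + q 0 + r 0 = 1) (hQ0 : Q 0 (-1) = 1) (hQ1 : p 0 * Q 1 (-1) = -1 - r 0) :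
    p 0 * ((-1) ^ 1 * Q 1 (-1) - (-1) ^ 0 * Q 0 (-1)) = 2 * r 0 * ((-1) ^ 0 * Q 0 (-1)) := by
  rw [hQ0]
  linear_combination -hQ1 - hs + hq0

theorem p_succ_mul_sub_at_neg_one {Q : ℕ → ℝ → ℝ} (hs : ∀ j, p j + q j + r j = 1)
    (hQrec : ∀ n : ℕ, ∀ x : ℝ, x * Q (n + 1) x =
      q (n + 1) * Q n x + r (n + 1) * Q (n + 1) x + p (n + 1) * Q (n + 2) x) (n : ℕ) :
    p (n + 1) * ((-1) ^ (n + 2) * Q (n + 2) (-1) - (-1) ^ (n + 1) * Q (n + 1) (-1)) =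
      q (n + 1) * ((-1) ^ (n + 1) * Q (n + 1) (-1) - (-1) ^ n * Q n (-1)) +
        2 * r (n + 1) * ((-1) ^ (n + 1) * Q (n + 1) (-1)) := by
  linear_combination (-1 : ℝ) ^ n * (Q (n + 1) (-1) * hs (n + 1) - hQrec n (-1))

end RandomWalk

open RandomWalk

theorem stmt5_general (p q r : ℕ → ℝ) (Q : ℕ → ℝ → ℝ)
    (hp : ∀ j, 0 < p j) (hq : ∀ j, 0 < q (j + 1))
    (hq0 : q 0 = 0) (hs : ∀ j, p j + q j + r j = 1)
    (hQ0 : ∀ x : ℝ, Q 0 x = 1) (hQ1 : ∀ x : ℝ, p 0 * Q 1 x = x - r 0)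
    (hQrec : ∀ n : ℕ, ∀ x : ℝ, x * Q (n + 1) x =
      q (n + 1) * Q n x + r (n + 1) * Q (n + 1) x + p (n + 1) * Q (n + 2) x)
    (π : ℕ → ℝ) (hπ0 : π 0 = 1) (hπ : ∀ n, π (n + 1) = π n * (p n / q (n + 1))) :
    ∀ n : ℕ,
      (-1 : ℝ) ^ (n + 1) * Q (n + 1) (-1) =
        1 + 2 * ∑ j ∈ Finset.range (n + 1), (1 / (p j * π j)) *
          ∑ k ∈ Finset.range (j + 1), r k * π k * ((-1 : ℝ) ^ k * Q k (-1)) := by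
  intro n
  set S : ℕ → ℝ := fun k => (-1 : ℝ) ^ k * Q k (-1)
  have hflux := p_mul_pi_mul_sub_eq_sum (S := S) (fun n => q_succ_mul_pi_succ (hq n).ne' (hπ n))
    hπ0 (p_zero_mul_sub_at_neg_one hq0 (hs 0) (hQ0 (-1)) (hQ1 (-1)))
    (p_succ_mul_sub_at_neg_one hs hQrec)
  have hstep (j : ℕ) : S (j + 1) - S j =
      2 * (1 / (p j * π j) * ∑ k ∈ range (j + 1), r k * π k * S k) := by
    have hpπ : p j * π j ≠ 0 := (mul_pos (hp j) (pi_pos hp hq hπ0 hπ j)).ne'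
    rw [mul_left_comm, ← hflux j, one_div_mul_eq_div, mul_comm, mul_div_cancel_right₀ _ hpπ]
  calc S (n + 1) = S 0 + ∑ j ∈ range (n + 1), (S (j + 1) - S j) := eq_sum_range_sub S (n + 1)
    _ = _ := by simp only [hstep, ← mul_sum, S, pow_zero, hQ0, one_mul]

theorem stmt5 (p q r : ℕ → ℝ) (Q : ℕ → ℝ → ℝ)
    (hp : ∀ j, 0 < p j) (hq : ∀ j, 0 < q (j + 1)) (hr : ∀ j, 0 ≤ r j)
    (hq0 : q 0 = 0) (hs : ∀ j, p j + q j + r j = 1)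
    (hQ0 : ∀ x : ℝ, Q 0 x = 1) (hQ1 : ∀ x : ℝ, p 0 * Q 1 x = x - r 0)
    (hQrec : ∀ n : ℕ, ∀ x : ℝ, x * Q (n + 1) x =
      q (n + 1) * Q n x + r (n + 1) * Q (n + 1) x + p (n + 1) * Q (n + 2) x)
    (π : ℕ → ℝ) (hπ0 : π 0 = 1) (hπ : ∀ n, π (n + 1) = π n * (p n / q (n + 1))) :
    ∀ n : ℕ,
      (-1 : ℝ) ^ (n + 1) * Q (n + 1) (-1) =
        1 + 2 * ∑ j ∈ Finset.range (n + 1), (1 / (p j * π j)) *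
          ∑ k ∈ Finset.range (j + 1), r k * π k * ((-1 : ℝ) ^ k * Q k (-1)) :=
  stmt5_general p q r Q hp hq hq0 hs hQ0 hQ1 hQrec π hπ0 hπ
end

section
/- The sequence ((−1)^n Q_n(−1))_{n≥0} is monotone increasing, and (−1)^n Q_n(−1) ≥ 1 for all n ≥ 0. -/
open Finset Filter

theorem stmt6 (p q r : ℕ → ℝ) (Q : ℕ → ℝ → ℝ)
    (hp : ∀ j, 0 < p j) (hq : ∀ j, 0 < q (j + 1)) (hr : ∀ j, 0 ≤ r j)
    (hq0 : q 0 = 0) (hs : ∀ j, p j + q j + r j = 1)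
    (hQ0 : ∀ x : ℝ, Q 0 x = 1) (hQ1 : ∀ x : ℝ, p 0 * Q 1 x = x - r 0)
    (hQrec : ∀ n : ℕ, ∀ x : ℝ, x * Q (n + 1) x =
      q (n + 1) * Q n x + r (n + 1) * Q (n + 1) x + p (n + 1) * Q (n + 2) x) :
    Monotone (fun n : ℕ => (-1 : ℝ) ^ n * Q n (-1)) ∧
      ∀ n : ℕ, 1 ≤ (-1 : ℝ) ^ n * Q n (-1) := by
  set a : ℕ → ℝ := fun n => (-1 : ℝ) ^ n * Q n (-1) with ha
  have h01 : a 0 ≤ a 1 ∧ 1 ≤ a 0 := by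
    have h1 := hQ1 (-1)
    have hp0 := hp 0
    have hs0 := hs 0
    have ha0 : a 0 = 1 := by simp [ha, hQ0]
    constructor
    · rw [ha0]
      have ha1 : a 1 = -Q 1 (-1) := by simp [ha]
      rw [ha1]
      nlinarith [hr 0]
    · rw [ha0]
  have key : ∀ n, a n ≤ a (n + 1) ∧ 1 ≤ a n := by
    intro n
    induction n with
    | zero => exact ⟨h01.1, h01.2⟩
    | succ m ih =>
      have hrec := hQrec m (-1)
      have hpm := hp (m + 1)
      have hqm := hq m
      have hrm := hr (m + 1)
      have hsm := hs (m + 1)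
      have e2 : ((-1 : ℝ) ^ m) ^ 2 = 1 := by
        rw [← pow_mul, pow_mul']; simp
      have ha1 : a (m + 1) = -((-1 : ℝ) ^ m * Q (m + 1) (-1)) := by
        simp [ha, pow_succ]
      have ha2 : a (m + 2) = (-1 : ℝ) ^ m * Q (m + 2) (-1) := by
        simp [ha, pow_succ]
      have ham : a m = (-1 : ℝ) ^ m * Q m (-1) := rfl
      -- p(m+1) * a(m+2) = (1 + r(m+1)) * a(m+1) - q(m+1) * a m
      have hstep : p (m + 1) * a (m + 2) =
          (1 + r (m + 1)) * a (m + 1) - q (m + 1) * a m := by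
        rw [ha1, ha2, ham]
        linear_combination (-(-1 : ℝ) ^ m) * hrec
      have h1 : 1 ≤ a (m + 1) := le_trans ih.2 ih.1
      constructor
      · nlinarith [ih.1, ih.2, h1]
      · exact h1
  refine ⟨monotone_nat_of_le_succ fun n => (key n).1, fun n => (key n).2⟩
end

section
/- If some r_j > 0 (the random walk is aperiodic), then the sequence ((−1)^n Q_n(−1))_{n≥0} is strictly increasing for all sufficiently large n. -/
/-! With `a n = (-1)^n Q_n(-1)` the three-term recurrence at `x = -1`, combined with
`p_n + q_n + r_n = 1`, becomes a recurrence for the increments: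
`p_n (a_{n+1} - a_n) = q_n (a_n - a_{n-1}) + 2 r_n a_n`, with `p_0 (a_1 - a_0) = 2 r_0`.
Since `a_0 = 1`, induction shows that `a` is nondecreasing and `≥ 1`. An index with `r_j > 0`
makes the increment at `j` positive, and `q_{n+1} > 0` propagates positivity to every
later increment. -/

namespace RandomWalkPolynomial

section IncrementRecurrence

variable {p q r a : ℕ → ℝ}

theorem one_le_and_le_succ (hp : ∀ n, 0 < p n) (hq : ∀ n, 0 ≤ q (n + 1))
    (hr : ∀ n, 0 ≤ r n)
    (ha0 : a 0 = 1) (hbase : p 0 * (a 1 - a 0) = 2 * r 0)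
    (hrec : ∀ n, p (n + 1) * (a (n + 2) - a (n + 1)) =
      q (n + 1) * (a (n + 1) - a n) + 2 * r (n + 1) * a (n + 1)) (n : ℕ) :
    1 ≤ a n ∧ a n ≤ a (n + 1) := by
  induction n with
  | zero =>
    refine ⟨ha0.ge, sub_nonneg.mp (nonneg_of_mul_nonneg_right ?_ (hp 0))⟩
    rw [hbase]
    linarith [hr 0]
  | succ n ih =>
    have h1 : 1 ≤ a (n + 1) := ih.1.trans ih.2
    refine ⟨h1, sub_nonneg.mp (nonneg_of_mul_nonneg_right ?_ (hp (n + 1)))⟩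
    rw [hrec n]
    have := mul_nonneg (hq n) (sub_nonneg.mpr ih.2)
    nlinarith [hr (n + 1)]

theorem lt_succ_of_pos_r (hp : ∀ n, 0 < p n) (hq : ∀ n, 0 ≤ q (n + 1)) (hr : ∀ n, 0 ≤ r n)
    (ha0 : a 0 = 1) (hbase : p 0 * (a 1 - a 0) = 2 * r 0)
    (hrec : ∀ n, p (n + 1) * (a (n + 2) - a (n + 1)) =
      q (n + 1) * (a (n + 1) - a n) + 2 * r (n + 1) * a (n + 1))
    {j : ℕ} (hj : 0 < r j) : a j < a (j + 1) := by
  refine sub_pos.mp (pos_of_mul_pos_right ?_ (hp j).le)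
  cases j with
  | zero => linarith [hbase]
  | succ n =>
    have hmono := one_le_and_le_succ hp hq hr ha0 hbase hrec
    rw [hrec n]
    have := mul_nonneg (hq n) (sub_nonneg.mpr (hmono n).2)
    nlinarith [(hmono (n + 1)).1]

theorem lt_succ_succ_of_lt_succ (hp : ∀ n, 0 < p n) (hq : ∀ n, 0 < q (n + 1))
    (hr : ∀ n, 0 ≤ r n) (hrec : ∀ n, p (n + 1) * (a (n + 2) - a (n + 1)) =
      q (n + 1) * (a (n + 1) - a n) + 2 * r (n + 1) * a (n + 1))
    {n : ℕ} (ha : 0 ≤ a (n + 1)) (h : a n < a (n + 1)) : a (n + 1) < a (n + 2) := by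
  refine sub_pos.mp (pos_of_mul_pos_right ?_ (hp (n + 1)).le)
  rw [hrec n]
  have := mul_pos (hq n) (sub_pos.mpr h)
  nlinarith [hr (n + 1)]

theorem lt_succ_of_pos_r_of_le (hp : ∀ n, 0 < p n) (hq : ∀ n, 0 < q (n + 1))
    (hr : ∀ n, 0 ≤ r n) (ha0 : a 0 = 1) (hbase : p 0 * (a 1 - a 0) = 2 * r 0)
    (hrec : ∀ n, p (n + 1) * (a (n + 2) - a (n + 1)) =
      q (n + 1) * (a (n + 1) - a n) + 2 * r (n + 1) * a (n + 1))
    {j : ℕ} (hj : 0 < r j) {n : ℕ} (hn : j ≤ n) : a n < a (n + 1) := by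
  have hq' : ∀ n, 0 ≤ q (n + 1) := fun n => (hq n).le
  induction n, hn using Nat.le_induction with
  | base => exact lt_succ_of_pos_r hp hq' hr ha0 hbase hrec hj
  | succ n _ ih =>
    have ha : 0 ≤ a (n + 1) :=
      zero_le_one.trans (one_le_and_le_succ hp hq' hr ha0 hbase hrec _).1
    exact lt_succ_succ_of_lt_succ hp hq hr hrec ha ih

end IncrementRecurrence

def altValue (Q : ℕ → ℝ → ℝ) (n : ℕ) : ℝ := (-1) ^ n * Q n (-1)

theorem altValue_zero {Q : ℕ → ℝ → ℝ} (hQ0 : ∀ x : ℝ, Q 0 x = 1) :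
    altValue Q 0 = 1 := by
  simp [altValue, hQ0]

theorem p_zero_mul_altValue_one_sub {p q r : ℕ → ℝ} {Q : ℕ → ℝ → ℝ}
    (hq0 : q 0 = 0) (hs : ∀ j, p j + q j + r j = 1)
    (hQ0 : ∀ x : ℝ, Q 0 x = 1) (hQ1 : ∀ x : ℝ, p 0 * Q 1 x = x - r 0) :
    p 0 * (altValue Q 1 - altValue Q 0) = 2 * r 0 := by
  simp only [altValue]
  linear_combination -hQ1 (-1) - p 0 * hQ0 (-1) - hs 0 + hq0

theorem p_succ_mul_altValue_sub {p q r : ℕ → ℝ} {Q : ℕ → ℝ → ℝ}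
    (hs : ∀ j, p j + q j + r j = 1)
    (hQrec : ∀ n : ℕ, ∀ x : ℝ, x * Q (n + 1) x =
      q (n + 1) * Q n x + r (n + 1) * Q (n + 1) x + p (n + 1) * Q (n + 2) x) (n : ℕ) :
    p (n + 1) * (altValue Q (n + 2) - altValue Q (n + 1)) =
      q (n + 1) * (altValue Q (n + 1) - altValue Q n) +
        2 * r (n + 1) * altValue Q (n + 1) := by
  simp only [altValue]
  linear_combination
    -(-1 : ℝ) ^ n * hQrec n (-1) - (-1 : ℝ) ^ (n + 1) * Q (n + 1) (-1) * hs (n + 1)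

end RandomWalkPolynomial

theorem stmt7 (p q r : ℕ → ℝ) (Q : ℕ → ℝ → ℝ)
    (hp : ∀ j, 0 < p j) (hq : ∀ j, 0 < q (j + 1)) (hr : ∀ j, 0 ≤ r j)
    (hq0 : q 0 = 0) (hs : ∀ j, p j + q j + r j = 1)
    (hQ0 : ∀ x : ℝ, Q 0 x = 1) (hQ1 : ∀ x : ℝ, p 0 * Q 1 x = x - r 0)
    (hQrec : ∀ n : ℕ, ∀ x : ℝ, x * Q (n + 1) x =
      q (n + 1) * Q n x + r (n + 1) * Q (n + 1) x + p (n + 1) * Q (n + 2) x)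
    (haper : ∃ j, 0 < r j) :
    ∃ N : ℕ, ∀ n ≥ N, (-1 : ℝ) ^ n * Q n (-1) < (-1 : ℝ) ^ (n + 1) * Q (n + 1) (-1) := by
  obtain ⟨j, hj⟩ := haper
  exact ⟨j, fun n hn => RandomWalkPolynomial.lt_succ_of_pos_r_of_le hp hq hr
    (RandomWalkPolynomial.altValue_zero hQ0)
    (RandomWalkPolynomial.p_zero_mul_altValue_one_sub hq0 hs hQ0 hQ1)
    (RandomWalkPolynomial.p_succ_mul_altValue_sub hs hQrec) hj hn⟩
end

section
/- If ∑_{j≥0} (1/(p_j π_j)) ∑_{k=0}^j r_k π_k = ∞, then (−1)^n Q_n(−1) → ∞ as n → ∞. -/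
open Finset Filter

theorem stmt8 (p q r : ℕ → ℝ) (Q : ℕ → ℝ → ℝ)
    (hp : ∀ j, 0 < p j) (hq : ∀ j, 0 < q (j + 1)) (hr : ∀ j, 0 ≤ r j)
    (hq0 : q 0 = 0) (hs : ∀ j, p j + q j + r j = 1)
    (hQ0 : ∀ x : ℝ, Q 0 x = 1) (hQ1 : ∀ x : ℝ, p 0 * Q 1 x = x - r 0)
    (hQrec : ∀ n : ℕ, ∀ x : ℝ, x * Q (n + 1) x =
      q (n + 1) * Q n x + r (n + 1) * Q (n + 1) x + p (n + 1) * Q (n + 2) x)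
    (π : ℕ → ℝ) (hπ0 : π 0 = 1) (hπ : ∀ n, π (n + 1) = π n * (p n / q (n + 1)))
    (hdiv : Tendsto (fun n : ℕ => ∑ j ∈ Finset.range n, (1 / (p j * π j)) *
      ∑ k ∈ Finset.range (j + 1), r k * π k) atTop atTop) :
    Tendsto (fun n : ℕ => (-1 : ℝ) ^ n * Q n (-1)) atTop atTop := by
  set u : ℕ → ℝ := fun n => (-1 : ℝ) ^ n * Q n (-1) with hu
  have hπpos : ∀ n, 0 < π n := by
    intro n
    induction n with
    | zero => rw [hπ0]; norm_num
    | succ n ih => rw [hπ]; exact mul_pos ih (div_pos (hp n) (hq n))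
  have hpπ : ∀ n, 0 < p n * π n := fun n => mul_pos (hp n) (hπpos n)
  have hqπ : ∀ n, q (n + 1) * π (n + 1) = p n * π n := by
    intro n
    rw [hπ]
    field_simp [(hq n).ne']
  have hu0 : u 0 = 1 := by simp [hu, hQ0]
  have hu1' : p 0 * u 1 = 1 + r 0 := by
    have h := hQ1 (-1)
    simp only [hu, pow_one]
    nlinarith [h]
  have hkey : ∀ n, p (n + 1) * (u (n + 2) - u (n + 1)) =
      q (n + 1) * (u (n + 1) - u n) + 2 * r (n + 1) * u (n + 1) := by
    intro n
    have h := hQrec n (-1)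
    have hs1 := hs (n + 1)
    simp only [hu, pow_succ]
    linear_combination (-((-1 : ℝ) ^ n)) * h + ((-1 : ℝ) ^ n * Q (n + 1) (-1)) * hs1
  have hD : ∀ n, p n * π n * (u (n + 1) - u n) =
      2 * ∑ k ∈ range (n + 1), r k * π k * u k := by
    intro n
    induction n with
    | zero =>
      have hs0 := hs 0
      simp only [zero_add, range_one, sum_singleton, hπ0, hu0, mul_one]
      nlinarith [hu1', hs0, hq0]
    | succ n ih =>
      rw [Finset.sum_range_succ, mul_add, ← ih]
      have hk := hkey n
      have hq' := hqπ n
      linear_combination (π (n + 1)) * hk + (u (n + 1) - u n) * hq'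
  have hge1 : ∀ n, 1 ≤ u n := by
    intro n
    induction n using Nat.strong_induction_on with
    | _ n ih =>
      match n with
      | 0 => rw [hu0]
      | (m + 1) =>
        have hD' := hD m
        have hsum : 0 ≤ ∑ k ∈ range (m + 1), r k * π k * u k := by
          refine Finset.sum_nonneg fun k hk => ?_
          have h1 : 1 ≤ u k := ih k (by simp at hk; omega)
          have := mul_nonneg (hr k) (hπpos k).le
          nlinarith
        have hdel : 0 ≤ u (m + 1) - u m := by nlinarith [hpπ m]
        have := ih m (by omega)
        linarith
  have hmono : ∀ n, u n + (1 / (p n * π n)) * ∑ k ∈ range (n + 1), r k * π k ≤ u (n + 1) := by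
    intro n
    have hSr : 0 ≤ ∑ k ∈ range (n + 1), r k * π k :=
      Finset.sum_nonneg fun k _ => mul_nonneg (hr k) (hπpos k).le
    have hsum_le : ∑ k ∈ range (n + 1), r k * π k ≤ ∑ k ∈ range (n + 1), r k * π k * u k :=
      Finset.sum_le_sum fun k _ =>
        le_mul_of_one_le_right (mul_nonneg (hr k) (hπpos k).le) (hge1 k)
    have h1 : (1 / (p n * π n)) * ∑ k ∈ range (n + 1), r k * π k ≤ u (n + 1) - u n := by
      rw [one_div, inv_mul_eq_div, div_le_iff₀ (hpπ n)]
      nlinarith [hD n]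
    linarith
  have hlb : ∀ n, (∑ j ∈ range n, (1 / (p j * π j)) *
      ∑ k ∈ range (j + 1), r k * π k) + 1 ≤ u n := by
    intro n
    induction n with
    | zero => simp [hu0]
    | succ n ih =>
      rw [sum_range_succ]
      have := hmono n
      linarith
  refine tendsto_atTop_mono (fun n => ?_) (tendsto_atTop_add_const_right _ 1 hdiv)
  have := hlb n
  exact this
end

section
/- If ∑_{j≥0} (1/(p_j π_j)) ∑_{k=0}^j r_k π_k < ∞, then the sequence ((−1)^n Q_n(−1))_{n≥0} is bounded, i.e., lim_{n→∞} (−1)^n Q_n(−1) < ∞. -/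
/-!
Put `u n = (-1)^n Q_n(-1)`. At `x = -1` the recurrence reads
`(1 + r_{n+1}) u_{n+1} = q_{n+1} u_n + p_{n+1} u_{n+2}`; multiplying by `π_{n+1}`, using
`q_{n+1} π_{n+1} = p_n π_n` and `p + q + r = 1`, it telescopes to the flux identity
`p_n π_n (u_{n+1} - u_n) = 2 ∑_{k ≤ n} r_k π_k u_k`.
Inductively the right side is nonnegative, so `u` increases from `u_0 = 1`; hence it is at most
`2 u_n ∑_{k ≤ n} r_k π_k`, i.e. `u_{n+1} ≤ (1 + 2 s_n) u_n` with `s_n` the `n`-th term of the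
convergent series, and the discrete Grönwall inequality bounds `u` by `exp (2 ∑ s)`.
-/

open Finset Filter

section Flux

variable {c w u : ℕ → ℝ}

theorem apply_zero_le_of_flux (hc : ∀ n, 0 < c n) (hw : ∀ k, 0 ≤ w k) (hu0 : 0 ≤ u 0)
    (hflux : ∀ n, c n * (u (n + 1) - u n) = ∑ k ∈ range (n + 1), w k * u k) (n : ℕ) :
    u 0 ≤ u n := by
  induction n using Nat.strong_induction_on with
  | _ n ih =>
    cases n with
    | zero => exact le_rfl
    | succ n =>
      have hsum : 0 ≤ ∑ k ∈ range (n + 1), w k * u k :=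
        sum_nonneg fun k hk => mul_nonneg (hw k) (hu0.trans (ih k (by simpa using hk)))
      have hstep : 0 ≤ u (n + 1) - u n :=
        nonneg_of_mul_nonneg_right ((hflux n).symm ▸ hsum) (hc n)
      linarith [ih n (Nat.lt_succ_self n)]

theorem monotone_of_flux (hc : ∀ n, 0 < c n) (hw : ∀ k, 0 ≤ w k) (hu0 : 0 ≤ u 0)
    (hflux : ∀ n, c n * (u (n + 1) - u n) = ∑ k ∈ range (n + 1), w k * u k) :
    Monotone u := by
  refine monotone_nat_of_le_succ fun n => ?_
  have hsum : 0 ≤ ∑ k ∈ range (n + 1), w k * u k :=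
    sum_nonneg fun k _ => mul_nonneg (hw k) (hu0.trans (apply_zero_le_of_flux hc hw hu0 hflux k))
  have := nonneg_of_mul_nonneg_right ((hflux n).symm ▸ hsum) (hc n)
  linarith

theorem succ_le_of_flux (hc : ∀ n, 0 < c n) (hw : ∀ k, 0 ≤ w k) (hu0 : 0 ≤ u 0)
    (hflux : ∀ n, c n * (u (n + 1) - u n) = ∑ k ∈ range (n + 1), w k * u k) (n : ℕ) :
    u (n + 1) ≤ (1 + (∑ k ∈ range (n + 1), w k) / c n) * u n := by
  have hmono := monotone_of_flux hc hw hu0 hflux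
  have hsum : ∑ k ∈ range (n + 1), w k * u k ≤ (∑ k ∈ range (n + 1), w k) * u n := by
    rw [sum_mul]
    exact sum_le_sum fun k hk =>
      mul_le_mul_of_nonneg_left (hmono (Nat.lt_succ_iff.mp (mem_range.mp hk))) (hw k)
  have hcn := hc n
  calc u (n + 1) = u n + (∑ k ∈ range (n + 1), w k * u k) / c n := by
        field_simp; linarith [hflux n]
    _ ≤ u n + (∑ k ∈ range (n + 1), w k) * u n / c n := by gcongr
    _ = (1 + (∑ k ∈ range (n + 1), w k) / c n) * u n := by ring

theorem le_mul_exp_tsum_of_flux (hc : ∀ n, 0 < c n) (hw : ∀ k, 0 ≤ w k) (hu0 : 0 ≤ u 0)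
    (hflux : ∀ n, c n * (u (n + 1) - u n) = ∑ k ∈ range (n + 1), w k * u k)
    (hsum : Summable fun n => (∑ k ∈ range (n + 1), w k) / c n) (n : ℕ) :
    u n ≤ u 0 * Real.exp (∑' j, (∑ k ∈ range (j + 1), w k) / c j) := by
  have hs : ∀ j, 0 ≤ (∑ k ∈ range (j + 1), w k) / c j :=
    fun j => div_nonneg (sum_nonneg fun k _ => hw k) (hc j).le
  have hgron := discrete_gronwall (b := 0) hu0
    (fun j _ => by simpa using succ_le_of_flux hc hw hu0 hflux j) (fun j _ => hs j)
    (fun _ _ => le_rfl) (Nat.zero_le n)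
  simp only [Pi.zero_apply, sum_const_zero, add_zero, Nat.Ico_zero_eq_range] at hgron
  exact hgron.trans (mul_le_mul_of_nonneg_left
    (Real.exp_le_exp.mpr (hsum.sum_le_tsum _ fun j _ => hs j)) hu0)

end Flux

section RandomWalk

variable {p q r π : ℕ → ℝ}

theorem pi_pos (hp : ∀ j, 0 < p j) (hq : ∀ j, 0 < q (j + 1)) (hπ0 : π 0 = 1)
    (hπ : ∀ n, π (n + 1) = π n * (p n / q (n + 1))) (n : ℕ) : 0 < π n := by
  induction n with
  | zero => simp [hπ0]
  | succ n ih => rw [hπ]; exact mul_pos ih (div_pos (hp n) (hq n))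

theorem q_mul_pi_succ (hq : ∀ j, 0 < q (j + 1))
    (hπ : ∀ n, π (n + 1) = π n * (p n / q (n + 1))) (n : ℕ) :
    q (n + 1) * π (n + 1) = p n * π n := by
  rw [hπ]
  field_simp [(hq n).ne']

theorem flux_of_recurrence {u : ℕ → ℝ} (hq0 : q 0 = 0) (hs : ∀ j, p j + q j + r j = 1)
    (hπ0 : π 0 = 1) (hbal : ∀ n, q (n + 1) * π (n + 1) = p n * π n)
    (hu0 : u 0 = 1) (hu1 : p 0 * u 1 = 1 + r 0)
    (hrec : ∀ n, (1 + r (n + 1)) * u (n + 1) = q (n + 1) * u n + p (n + 1) * u (n + 2))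
    (n : ℕ) : p n * π n * (u (n + 1) - u n) = ∑ k ∈ range (n + 1), 2 * r k * π k * u k := by
  induction n with
  | zero =>
    rw [sum_range_one, hπ0, hu0]
    linear_combination hu1 - hs 0 + hq0
  | succ n ih =>
    rw [sum_range_succ, ← ih]
    linear_combination -π (n + 1) * hrec n - π (n + 1) * u (n + 1) * hs (n + 1)
      + (u (n + 1) - u n) * hbal n

end RandomWalk

theorem stmt9 (p q r : ℕ → ℝ) (Q : ℕ → ℝ → ℝ)
    (hp : ∀ j, 0 < p j) (hq : ∀ j, 0 < q (j + 1)) (hr : ∀ j, 0 ≤ r j)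
    (hq0 : q 0 = 0) (hs : ∀ j, p j + q j + r j = 1)
    (hQ0 : ∀ x : ℝ, Q 0 x = 1) (hQ1 : ∀ x : ℝ, p 0 * Q 1 x = x - r 0)
    (hQrec : ∀ n : ℕ, ∀ x : ℝ, x * Q (n + 1) x =
      q (n + 1) * Q n x + r (n + 1) * Q (n + 1) x + p (n + 1) * Q (n + 2) x)
    (π : ℕ → ℝ) (hπ0 : π 0 = 1) (hπ : ∀ n, π (n + 1) = π n * (p n / q (n + 1)))
    (hconv : Summable (fun j : ℕ => (1 / (p j * π j)) *
      ∑ k ∈ Finset.range (j + 1), r k * π k)) :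
    ∃ C : ℝ, ∀ n : ℕ, (-1 : ℝ) ^ n * Q n (-1) ≤ C := by
  set u : ℕ → ℝ := fun n => (-1) ^ n * Q n (-1)
  have hu0 : u 0 = 1 := by simp [u, hQ0]
  have hu1 : p 0 * u 1 = 1 + r 0 := by linear_combination -hQ1 (-1)
  have hrec : ∀ n, (1 + r (n + 1)) * u (n + 1) = q (n + 1) * u n + p (n + 1) * u (n + 2) :=
    fun n => by linear_combination (-1 : ℝ) ^ n * hQrec n (-1)
  have hflux := flux_of_recurrence hq0 hs hπ0 (q_mul_pi_succ hq hπ) hu0 hu1 hrec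
  have hpπ : ∀ n, 0 < p n * π n := fun n => mul_pos (hp n) (pi_pos hp hq hπ0 hπ n)
  have hw : ∀ k, 0 ≤ 2 * r k * π k :=
    fun k => mul_nonneg (mul_nonneg two_pos.le (hr k)) (pi_pos hp hq hπ0 hπ k).le
  have hsum : Summable fun n => (∑ k ∈ range (n + 1), 2 * r k * π k) / (p n * π n) := by
    refine (hconv.mul_left 2).congr fun n => ?_
    simp only [mul_assoc (2 : ℝ), ← mul_sum]
    ring
  exact ⟨_, le_mul_exp_tsum_of_flux hpπ hw (zero_le_one.trans_eq hu0.symm) hflux hsum⟩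
end

section
/- If ∑_{j≥0} r_j/p_j = ∞, then (−1)^n Q_n(−1) → ∞ as n → ∞. -/
/-!
Put `a n = (-1)^n Q_n(-1)`. Evaluating the three-term recurrence at `x = -1` and using
`p + q + r = 1` gives `p_{n+1} Δ_{n+1} = q_{n+1} Δ_n + 2 r_{n+1} a_{n+1}` for the increments
`Δ_n = a_{n+1} - a_n`, and `p_0 Δ_0 = 2 r_0`. By induction `a_n ≥ 1` and `p_n Δ_n ≥ 2 r_n`,
so telescoping gives `a_n ≥ 1 + 2 ∑_{j<n} r_j / p_j → ∞`.
-/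

open Finset Filter

lemma add_sum_le_of_le_sub {a b : ℕ → ℝ} (h : ∀ n, b n ≤ a (n + 1) - a n) (n : ℕ) :
    a 0 + ∑ j ∈ range n, b j ≤ a n := by
  have := sum_le_sum fun j (_ : j ∈ range n) => h j
  rw [sum_range_sub] at this
  linarith

section Increments

variable {p q r a : ℕ → ℝ}

lemma one_le_and_two_mul_le_increment (hp : ∀ n, 0 < p n) (hq : ∀ n, 0 ≤ q (n + 1))
    (hr : ∀ n, 0 ≤ r n) (ha0 : a 0 = 1) (ha1 : p 0 * (a 1 - a 0) = 2 * r 0)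
    (hrec : ∀ n, p (n + 1) * (a (n + 2) - a (n + 1)) =
      q (n + 1) * (a (n + 1) - a n) + 2 * r (n + 1) * a (n + 1)) (n : ℕ) :
    1 ≤ a n ∧ 2 * r n ≤ p n * (a (n + 1) - a n) := by
  induction n with
  | zero => exact ⟨ha0.ge, ha1.ge⟩
  | succ n ih =>
    obtain ⟨ha, hΔ⟩ := ih
    have hΔ_nonneg : 0 ≤ a (n + 1) - a n :=
      nonneg_of_mul_nonneg_right (by linarith [hr n]) (hp n)
    have ha' : 1 ≤ a (n + 1) := by linarith
    refine ⟨ha', ?_⟩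
    rw [hrec n]
    nlinarith [mul_nonneg (hq n) hΔ_nonneg, hr (n + 1)]

lemma two_mul_div_le_increment (hp : ∀ n, 0 < p n) (hq : ∀ n, 0 ≤ q (n + 1))
    (hr : ∀ n, 0 ≤ r n) (ha0 : a 0 = 1) (ha1 : p 0 * (a 1 - a 0) = 2 * r 0)
    (hrec : ∀ n, p (n + 1) * (a (n + 2) - a (n + 1)) =
      q (n + 1) * (a (n + 1) - a n) + 2 * r (n + 1) * a (n + 1)) (n : ℕ) :
    2 * (r n / p n) ≤ a (n + 1) - a n := by
  rw [← mul_div_assoc, div_le_iff₀ (hp n), mul_comm _ (p n)]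
  exact (one_le_and_two_mul_le_increment hp hq hr ha0 ha1 hrec n).2

end Increments

section AlternatingValues

variable {p q r : ℕ → ℝ} {Q : ℕ → ℝ → ℝ}

lemma increment_recurrence_at_neg_one (hs : ∀ j, p j + q j + r j = 1)
    (hQrec : ∀ n : ℕ, ∀ x : ℝ, x * Q (n + 1) x =
      q (n + 1) * Q n x + r (n + 1) * Q (n + 1) x + p (n + 1) * Q (n + 2) x) (n : ℕ) :
    p (n + 1) * ((-1) ^ (n + 2) * Q (n + 2) (-1) - (-1) ^ (n + 1) * Q (n + 1) (-1)) =
      q (n + 1) * ((-1) ^ (n + 1) * Q (n + 1) (-1) - (-1) ^ n * Q n (-1)) +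
        2 * r (n + 1) * ((-1) ^ (n + 1) * Q (n + 1) (-1)) := by
  simp only [pow_succ]
  linear_combination (-(-1 : ℝ) ^ n) * hQrec n (-1) + ((-1) ^ n * Q (n + 1) (-1)) * hs (n + 1)

lemma first_increment_at_neg_one (hq0 : q 0 = 0) (hs : ∀ j, p j + q j + r j = 1)
    (hQ0 : ∀ x : ℝ, Q 0 x = 1) (hQ1 : ∀ x : ℝ, p 0 * Q 1 x = x - r 0) :
    p 0 * ((-1) ^ 1 * Q 1 (-1) - (-1) ^ 0 * Q 0 (-1)) = 2 * r 0 := by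
  linear_combination -hQ1 (-1) - p 0 * hQ0 (-1) - hs 0 + hq0

end AlternatingValues

theorem stmt11 (p q r : ℕ → ℝ) (Q : ℕ → ℝ → ℝ)
    (hp : ∀ j, 0 < p j) (hq : ∀ j, 0 < q (j + 1)) (hr : ∀ j, 0 ≤ r j)
    (hq0 : q 0 = 0) (hs : ∀ j, p j + q j + r j = 1)
    (hQ0 : ∀ x : ℝ, Q 0 x = 1) (hQ1 : ∀ x : ℝ, p 0 * Q 1 x = x - r 0)
    (hQrec : ∀ n : ℕ, ∀ x : ℝ, x * Q (n + 1) x =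
      q (n + 1) * Q n x + r (n + 1) * Q (n + 1) x + p (n + 1) * Q (n + 2) x)
    (hdiv : Tendsto (fun n : ℕ => ∑ j ∈ Finset.range n, r j / p j) atTop atTop) :
    Tendsto (fun n : ℕ => (-1 : ℝ) ^ n * Q n (-1)) atTop atTop := by
  have hΔ := two_mul_div_le_increment (a := fun n => (-1) ^ n * Q n (-1)) hp
    (fun n => (hq n).le) hr (by simp [hQ0]) (first_increment_at_neg_one hq0 hs hQ0 hQ1)
    (increment_recurrence_at_neg_one hs hQrec)
  have hlower (n : ℕ) : 1 + 2 * ∑ j ∈ range n, r j / p j ≤ (-1) ^ n * Q n (-1) := by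
    simpa [hQ0, mul_sum] using add_sum_le_of_le_sub (a := fun n => (-1) ^ n * Q n (-1)) hΔ n
  exact tendsto_atTop_mono hlower
    (tendsto_atTop_add_const_left _ 1 (hdiv.const_mul_atTop two_pos))
end

section
/- Let θ ≥ 1 satisfy Q_n(θ) > 0 for all n, and define p_j(θ) := (Q_{j+1}(θ)/Q_j(θ)) p_j/θ, r_j(θ) := r_j/θ, q_0(θ) := 0, q_{j+1}(θ) := (Q_j(θ)/Q_{j+1}(θ)) q_{j+1}/θ. Then p_j(θ) > 0, q_{j+1}(θ) > 0, r_j(θ) ≥ 0, and p_j(θ) + q_j(θ) + r_j(θ) = 1 for all j ≥ 0. -/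
open Finset Filter

theorem stmt13 (p q r : ℕ → ℝ) (Q : ℕ → ℝ → ℝ)
    (hp : ∀ j, 0 < p j) (hq : ∀ j, 0 < q (j + 1)) (hr : ∀ j, 0 ≤ r j)
    (hq0 : q 0 = 0) (hs : ∀ j, p j + q j + r j = 1)
    (hQ0 : ∀ x : ℝ, Q 0 x = 1) (hQ1 : ∀ x : ℝ, p 0 * Q 1 x = x - r 0)
    (hQrec : ∀ n : ℕ, ∀ x : ℝ, x * Q (n + 1) x =
      q (n + 1) * Q n x + r (n + 1) * Q (n + 1) x + p (n + 1) * Q (n + 2) x)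
    (θ : ℝ) (hθ : 1 ≤ θ) (hQθ : ∀ n, 0 < Q n θ)
    (pθ qθ rθ : ℕ → ℝ)
    (hpθ : ∀ j, pθ j = Q (j + 1) θ / Q j θ * p j / θ)
    (hrθ : ∀ j, rθ j = r j / θ)
    (hqθ0 : qθ 0 = 0)
    (hqθ : ∀ j, qθ (j + 1) = Q j θ / Q (j + 1) θ * q (j + 1) / θ) :
    ∀ j : ℕ, 0 < pθ j ∧ 0 < qθ (j + 1) ∧ 0 ≤ rθ j ∧ pθ j + qθ j + rθ j = 1 := by
  have hθ0 : (0:ℝ) < θ := lt_of_lt_of_le one_pos hθ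
  intro j
  refine ⟨?_, ?_, ?_, ?_⟩
  · rw [hpθ]
    exact div_pos (mul_pos (div_pos (hQθ _) (hQθ _)) (hp j)) hθ0
  · rw [hqθ]
    exact div_pos (mul_pos (div_pos (hQθ _) (hQθ _)) (hq j)) hθ0
  · rw [hrθ]; exact div_nonneg (hr j) hθ0.le
  · cases j with
    | zero =>
      rw [hpθ, hqθ0, hrθ, hQ0]
      have h1 := hQ1 θ
      field_simp
      nlinarith [hQ1 θ]
    | succ n =>
      rw [hpθ, hqθ, hrθ]
      have h := hQrec n θ
      have h1 := (hQθ n).ne'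
      have h2 := (hQθ (n+1)).ne'
      field_simp
      nlinarith [hQrec n θ]
end

section
/- Let θ > 0 with Q_n(θ) > 0 for all n, and let Q_n(·; θ) denote the polynomials associated with the transformed parameters p_j(θ) = (Q_{j+1}(θ)/Q_j(θ)) p_j/θ, r_j(θ) = r_j/θ, q_{j+1}(θ) = (Q_j(θ)/Q_{j+1}(θ)) q_{j+1}/θ (i.e., defined by the same three-term recurrence with these coefficients). Then Q_n(x; θ) = Q_n(θ x)/Q_n(θ) for all n ≥ 0 and all real x. -/
/-!
Substituting `θ x` into the recurrence for `Q` and dividing by `θ Q_{n+1}(θ)` shows that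
`x ↦ Q_n(θ x) / Q_n(θ)` satisfies the recurrence with the transformed coefficients; since
`p_j(θ) ≠ 0`, a solution of that recurrence is determined by its initial conditions.
-/

structure IsRandomWalkPolys (p q r : ℕ → ℝ) (Q : ℕ → ℝ → ℝ) : Prop where
  zero : ∀ x, Q 0 x = 1
  one : ∀ x, p 0 * Q 1 x = x - r 0
  succ_succ : ∀ n x, x * Q (n + 1) x =
    q (n + 1) * Q n x + r (n + 1) * Q (n + 1) x + p (n + 1) * Q (n + 2) x

namespace IsRandomWalkPolys

variable {p q r : ℕ → ℝ} {Q : ℕ → ℝ → ℝ}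

theorem unique {Q' : ℕ → ℝ → ℝ} (hQ : IsRandomWalkPolys p q r Q)
    (hQ' : IsRandomWalkPolys p q r Q') (hp : ∀ j, p j ≠ 0) : Q = Q' := by
  funext n x
  induction n using Nat.twoStepInduction generalizing x with
  | zero => rw [hQ.zero, hQ'.zero]
  | one => exact mul_left_cancel₀ (hp 0) ((hQ.one x).trans (hQ'.one x).symm)
  | more n ih₀ ih₁ =>
    refine mul_left_cancel₀ (hp (n + 1)) ?_
    have h := hQ.succ_succ n x
    have h' := hQ'.succ_succ n x
    rw [ih₀, ih₁] at h
    linear_combination h' - h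

theorem rescale (hQ : IsRandomWalkPolys p q r Q) {θ : ℝ} (hθ : θ ≠ 0)
    (hQθ : ∀ n, Q n θ ≠ 0) {pθ qθ rθ : ℕ → ℝ}
    (hpθ : ∀ j, pθ j = Q (j + 1) θ / Q j θ * p j / θ)
    (hrθ : ∀ j, rθ j = r j / θ)
    (hqθ : ∀ j, qθ (j + 1) = Q j θ / Q (j + 1) θ * q (j + 1) / θ) :
    IsRandomWalkPolys pθ qθ rθ (fun n x => Q n (θ * x) / Q n θ) where
  zero x := by simp [hQ.zero]
  one x := by
    have h := hQ.one (θ * x)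
    rw [hpθ, hrθ, hQ.zero]
    field_simp [hQθ 0, hQθ 1]
    linear_combination h
  succ_succ n x := by
    have h := hQ.succ_succ n (θ * x)
    rw [mul_comm θ x] at h
    rw [hpθ, hrθ, hqθ, mul_comm θ x]
    field_simp [hQθ n, hQθ (n + 1), hQθ (n + 2)]
    linear_combination h

end IsRandomWalkPolys

theorem stmt14_general (p q r : ℕ → ℝ) (Q : ℕ → ℝ → ℝ)
    (hp : ∀ j, 0 < p j)
    (hQ0 : ∀ x : ℝ, Q 0 x = 1) (hQ1 : ∀ x : ℝ, p 0 * Q 1 x = x - r 0)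
    (hQrec : ∀ n : ℕ, ∀ x : ℝ, x * Q (n + 1) x =
      q (n + 1) * Q n x + r (n + 1) * Q (n + 1) x + p (n + 1) * Q (n + 2) x)
    (θ : ℝ) (hθ : 0 < θ) (hQθ : ∀ n, 0 < Q n θ)
    (pθ qθ rθ : ℕ → ℝ) (Qθ : ℕ → ℝ → ℝ)
    (hpθ : ∀ j, pθ j = Q (j + 1) θ / Q j θ * p j / θ)
    (hrθ : ∀ j, rθ j = r j / θ)
    (hqθ : ∀ j, qθ (j + 1) = Q j θ / Q (j + 1) θ * q (j + 1) / θ)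
    (hQθ0 : ∀ x : ℝ, Qθ 0 x = 1) (hQθ1 : ∀ x : ℝ, pθ 0 * Qθ 1 x = x - rθ 0)
    (hQθrec : ∀ n : ℕ, ∀ x : ℝ, x * Qθ (n + 1) x =
      qθ (n + 1) * Qθ n x + rθ (n + 1) * Qθ (n + 1) x + pθ (n + 1) * Qθ (n + 2) x) :
    ∀ (n : ℕ) (x : ℝ), Qθ n x = Q n (θ * x) / Q n θ := by
  have hQθ_ne n : Q n θ ≠ 0 := (hQθ n).ne'
  have hpθ_ne j : pθ j ≠ 0 := by
    rw [hpθ]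
    exact div_ne_zero (mul_ne_zero (div_ne_zero (hQθ_ne _) (hQθ_ne _)) (hp j).ne') hθ.ne'
  have hscaled := IsRandomWalkPolys.rescale ⟨hQ0, hQ1, hQrec⟩ hθ.ne' hQθ_ne hpθ hrθ hqθ
  intro n x
  rw [IsRandomWalkPolys.unique ⟨hQθ0, hQθ1, hQθrec⟩ hscaled hpθ_ne]

theorem stmt14 (p q r : ℕ → ℝ) (Q : ℕ → ℝ → ℝ)
    (hp : ∀ j, 0 < p j) (hq : ∀ j, 0 < q (j + 1)) (hr : ∀ j, 0 ≤ r j)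
    (hq0 : q 0 = 0) (hs : ∀ j, p j + q j + r j = 1)
    (hQ0 : ∀ x : ℝ, Q 0 x = 1) (hQ1 : ∀ x : ℝ, p 0 * Q 1 x = x - r 0)
    (hQrec : ∀ n : ℕ, ∀ x : ℝ, x * Q (n + 1) x =
      q (n + 1) * Q n x + r (n + 1) * Q (n + 1) x + p (n + 1) * Q (n + 2) x)
    (θ : ℝ) (hθ : 0 < θ) (hQθ : ∀ n, 0 < Q n θ)
    (pθ qθ rθ : ℕ → ℝ) (Qθ : ℕ → ℝ → ℝ)
    (hpθ : ∀ j, pθ j = Q (j + 1) θ / Q j θ * p j / θ)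
    (hrθ : ∀ j, rθ j = r j / θ)
    (hqθ0 : qθ 0 = 0)
    (hqθ : ∀ j, qθ (j + 1) = Q j θ / Q (j + 1) θ * q (j + 1) / θ)
    (hQθ0 : ∀ x : ℝ, Qθ 0 x = 1) (hQθ1 : ∀ x : ℝ, pθ 0 * Qθ 1 x = x - rθ 0)
    (hQθrec : ∀ n : ℕ, ∀ x : ℝ, x * Qθ (n + 1) x =
      qθ (n + 1) * Qθ n x + rθ (n + 1) * Qθ (n + 1) x + pθ (n + 1) * Qθ (n + 2) x) :
    ∀ (n : ℕ) (x : ℝ), Qθ n x = Q n (θ * x) / Q n θ :=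
  stmt14_general p q r Q hp hQ0 hQ1 hQrec θ hθ hQθ pθ qθ rθ Qθ hpθ hrθ hqθ hQθ0 hQθ1 hQθrec
end

section
/- (Change-of-state lemma.) Fix n and ℓ with 0 ≤ ℓ ≤ n, and let M_n := ∑_{j=0}^n (1/(p_j π_j)) ∑_{k=0}^j r_k π_k. Suppose the transition probabilities at state ℓ are changed to p'_ℓ, q'_ℓ, r'_ℓ with p'_ℓ > 0, r'_ℓ ≥ 0, p'_ℓ + q'_ℓ + r'_ℓ = 1 (and q'_0 = 0), satisfying p'_ℓ ≤ p_ℓ, q'_ℓ ≥ q_ℓ, r'_ℓ ≥ r_ℓ, while all other transition probabilities are unchanged. Let M'_n denote the value of the analogous sum computed with the modified parameters. Then M'_n ≥ M_n. -/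
/-!
Since `π k / π j = ∏_{k ≤ i < j} q (i+1) / p i`, each summand of `M_n` can be expanded as
`r k π k / (p j π j) = r k / (p j ∏_{k ≤ i < j} p i / q (i+1))`, with no normalisation left.
In this form every summand is antitone in each `p i` and monotone in each `q i` and `r k`, so
`M_n` grows under any pointwise change `p' ≤ p`, `q ≤ q'`, `r ≤ r'`, in particular under a change
at the single state `ℓ`.
-/

open Finset

lemma eq_mul_prod_Ico_of_succ_eq_mul {π x : ℕ → ℝ} (hπ : ∀ n, π (n + 1) = π n * x n)
    {k j : ℕ} (hkj : k ≤ j) : π j = π k * ∏ i ∈ Ico k j, x i := by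
  induction j, hkj using Nat.le_induction with
  | base => simp
  | succ j hkj ih => rw [hπ, ih, prod_Ico_succ_top hkj, mul_assoc]

lemma ne_zero_of_succ_eq_mul {π x : ℕ → ℝ} (hπ : ∀ n, π (n + 1) = π n * x n)
    (h0 : π 0 ≠ 0) (hx : ∀ n, x n ≠ 0) (k : ℕ) : π k ≠ 0 := by
  rw [eq_mul_prod_Ico_of_succ_eq_mul hπ k.zero_le]
  exact mul_ne_zero h0 (prod_ne_zero_iff.mpr fun i _ => hx i)

noncomputable def meanSum (p r π : ℕ → ℝ) (n : ℕ) : ℝ :=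
  ∑ j ∈ range (n + 1), (1 / (p j * π j)) * ∑ k ∈ range (j + 1), r k * π k

section Monotonicity

variable {p q r π p' q' r' π' : ℕ → ℝ}

lemma meanSum_eq_sum_div_prod (hπ : ∀ n, π (n + 1) = π n * (p n / q (n + 1)))
    (hπ_ne : ∀ k, π k ≠ 0) (n : ℕ) :
    meanSum p r π n = ∑ j ∈ range (n + 1), ∑ k ∈ range (j + 1),
      r k / (p j * ∏ i ∈ Ico k j, p i / q (i + 1)) := by
  refine sum_congr rfl fun j _ => ?_
  rw [mul_sum]
  refine sum_congr rfl fun k hk => ?_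
  rw [eq_mul_prod_Ico_of_succ_eq_mul hπ (Nat.lt_succ_iff.mp (mem_range.mp hk)),
    mul_left_comm, ← mul_div_mul_left (r k) _ (hπ_ne k)]
  ring

lemma div_mul_prod_le_div_mul_prod (hp' : ∀ i, 0 < p' i) (hq : ∀ i, 0 < q (i + 1))
    (hpp : ∀ i, p' i ≤ p i) (hqq : ∀ i, q (i + 1) ≤ q' (i + 1)) {s s' : ℝ} (hs : 0 ≤ s)
    (hss : s ≤ s') (k j : ℕ) :
    s / (p j * ∏ i ∈ Ico k j, p i / q (i + 1))
      ≤ s' / (p' j * ∏ i ∈ Ico k j, p' i / q' (i + 1)) := by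
  have hq' : ∀ i, 0 < q' (i + 1) := fun i => (hq i).trans_le (hqq i)
  have hprod : ∏ i ∈ Ico k j, p' i / q' (i + 1) ≤ ∏ i ∈ Ico k j, p i / q (i + 1) :=
    prod_le_prod (fun i _ => (div_pos (hp' i) (hq' i)).le)
      fun i _ => div_le_div₀ ((hp' i).le.trans (hpp i)) (hpp i) (hq i) (hqq i)
  refine div_le_div₀ (hs.trans hss) hss ?_ ?_
  · exact mul_pos (hp' j) (prod_pos fun i _ => div_pos (hp' i) (hq' i))
  · exact mul_le_mul (hpp j) hprod (prod_nonneg fun i _ => (div_pos (hp' i) (hq' i)).le)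
      ((hp' j).le.trans (hpp j))

theorem meanSum_le_meanSum (hp' : ∀ i, 0 < p' i) (hq : ∀ i, 0 < q (i + 1))
    (hr : ∀ i, 0 ≤ r i) (hpp : ∀ i, p' i ≤ p i) (hqq : ∀ i, q (i + 1) ≤ q' (i + 1))
    (hrr : ∀ i, r i ≤ r' i)
    (hπ0 : π 0 ≠ 0) (hπ : ∀ n, π (n + 1) = π n * (p n / q (n + 1)))
    (hπ'0 : π' 0 ≠ 0) (hπ' : ∀ n, π' (n + 1) = π' n * (p' n / q' (n + 1))) (n : ℕ) :
    meanSum p r π n ≤ meanSum p' r' π' n := by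
  have hq' : ∀ i, 0 < q' (i + 1) := fun i => (hq i).trans_le (hqq i)
  have hp : ∀ i, 0 < p i := fun i => (hp' i).trans_le (hpp i)
  rw [meanSum_eq_sum_div_prod hπ
      (ne_zero_of_succ_eq_mul hπ hπ0 fun i => (div_pos (hp i) (hq i)).ne'),
    meanSum_eq_sum_div_prod hπ'
      (ne_zero_of_succ_eq_mul hπ' hπ'0 fun i => (div_pos (hp' i) (hq' i)).ne')]
  exact sum_le_sum fun j _ => sum_le_sum fun k _ =>
    div_mul_prod_le_div_mul_prod hp' hq hpp hqq (hr k) (hrr k) k j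

end Monotonicity

lemma le_of_eq_of_ne_of_le {α β : Type*} [Preorder β] {f g : α → β} {a : α}
    (h : ∀ x, x ≠ a → f x = g x) (ha : f a ≤ g a) (x : α) : f x ≤ g x := by
  rcases eq_or_ne x a with rfl | hx
  exacts [ha, (h x hx).le]

theorem stmt16_general (p q r p' q' r' : ℕ → ℝ)
    (hp : ∀ j, 0 < p j) (hq : ∀ j, 0 < q (j + 1)) (hr : ∀ j, 0 ≤ r j)
    (π : ℕ → ℝ) (hπ0 : π 0 = 1) (hπ : ∀ n, π (n + 1) = π n * (p n / q (n + 1)))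
    (π' : ℕ → ℝ) (hπ'0 : π' 0 = 1) (hπ' : ∀ n, π' (n + 1) = π' n * (p' n / q' (n + 1)))
    (n ℓ : ℕ)
    (hsame : ∀ j, j ≠ ℓ → p' j = p j ∧ q' j = q j ∧ r' j = r j)
    (hp'pos : 0 < p' ℓ)
    (hple : p' ℓ ≤ p ℓ) (hqge : q' ℓ ≥ q ℓ) (hrge : r' ℓ ≥ r ℓ) :
    ∑ j ∈ Finset.range (n + 1), (1 / (p' j * π' j)) *
        ∑ k ∈ Finset.range (j + 1), r' k * π' k ≥
      ∑ j ∈ Finset.range (n + 1), (1 / (p j * π j)) *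
        ∑ k ∈ Finset.range (j + 1), r k * π k := by
  have hp' : ∀ j, 0 < p' j := fun j => by
    rcases eq_or_ne j ℓ with rfl | hj
    exacts [hp'pos, (hsame j hj).1 ▸ hp j]
  have hpp := le_of_eq_of_ne_of_le (fun j hj => (hsame j hj).1) hple
  have hqq := le_of_eq_of_ne_of_le (fun j hj => ((hsame j hj).2.1).symm) hqge
  have hrr := le_of_eq_of_ne_of_le (fun j hj => ((hsame j hj).2.2).symm) hrge
  show meanSum p r π n ≤ meanSum p' r' π' n
  exact meanSum_le_meanSum hp' hq hr hpp (fun i => hqq (i + 1)) hrr (by simp [hπ0]) hπ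
    (by simp [hπ'0]) hπ' n

theorem stmt16 (p q r p' q' r' : ℕ → ℝ)
    (hp : ∀ j, 0 < p j) (hq : ∀ j, 0 < q (j + 1)) (hr : ∀ j, 0 ≤ r j)
    (hq0 : q 0 = 0) (hs : ∀ j, p j + q j + r j = 1)
    (π : ℕ → ℝ) (hπ0 : π 0 = 1) (hπ : ∀ n, π (n + 1) = π n * (p n / q (n + 1)))
    (π' : ℕ → ℝ) (hπ'0 : π' 0 = 1) (hπ' : ∀ n, π' (n + 1) = π' n * (p' n / q' (n + 1)))
    (n ℓ : ℕ) (hℓ : ℓ ≤ n)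
    (hsame : ∀ j, j ≠ ℓ → p' j = p j ∧ q' j = q j ∧ r' j = r j)
    (hq'0 : q' 0 = 0)
    (hp'pos : 0 < p' ℓ) (hr'pos : 0 ≤ r' ℓ) (hs' : p' ℓ + q' ℓ + r' ℓ = 1)
    (hple : p' ℓ ≤ p ℓ) (hqge : q' ℓ ≥ q ℓ) (hrge : r' ℓ ≥ r ℓ) :
    ∑ j ∈ Finset.range (n + 1), (1 / (p' j * π' j)) *
        ∑ k ∈ Finset.range (j + 1), r' k * π' k ≥
      ∑ j ∈ Finset.range (n + 1), (1 / (p j * π j)) *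
        ∑ k ∈ Finset.range (j + 1), r k * π k :=
  stmt16_general p q r p' q' r' hp hq hr π hπ0 hπ π' hπ'0 hπ' n ℓ hsame hp'pos hple hqge hrge
end

section
/- If r_j > 0 for some j (aperiodicity) and θ ≥ 1 is such that Q_n(θ) > 0 for all n, then the sequence (|Q_n(θ)/Q_n(−θ)|)_{n≥0} is monotone decreasing with all terms ≤ 1, and its limit is strictly less than 1. -/
/-!
Put `a n = (-1)ⁿ Q n (-θ)` and `b n = Q n θ`. Both satisfy the three-term recurrence, with `r` replaced
by `-r` for `a`, so their Casoratian `W n = a (n+1) b n - a n b (n+1)` satisfies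
`p (n+1) W (n+1) = 2 r (n+1) a (n+1) b (n+1) + q (n+1) W n` and `p 0 W 0 = 2 r 0`.
As long as `b > 0`, an induction gives `a > 0` and `W ≥ 0`, i.e. `b n / a n = |Q n θ / Q n (-θ)|`
decreases from `b 0 / a 0 = 1`; it decreases strictly at any `j` with `r j > 0`, so its limit is `< 1`.
-/

open Filter

def casoratian (a b : ℕ → ℝ) (n : ℕ) : ℝ := a (n + 1) * b n - a n * b (n + 1)

section Casoratian

variable {p q r a b : ℕ → ℝ} {θ : ℝ}

theorem casoratian_succ (n : ℕ)
    (ha : p (n + 1) * a (n + 2) = (θ + r (n + 1)) * a (n + 1) - q (n + 1) * a n)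
    (hb : p (n + 1) * b (n + 2) = (θ - r (n + 1)) * b (n + 1) - q (n + 1) * b n) :
    p (n + 1) * casoratian a b (n + 1) =
      2 * r (n + 1) * a (n + 1) * b (n + 1) + q (n + 1) * casoratian a b n := by
  unfold casoratian
  linear_combination b (n + 1) * ha - a (n + 1) * hb

theorem pos_and_casoratian_nonneg (hp : ∀ n, 0 < p n) (hq : ∀ n, 0 ≤ q (n + 1))
    (hr : ∀ n, 0 ≤ r n)
    (ha : ∀ n, p (n + 1) * a (n + 2) = (θ + r (n + 1)) * a (n + 1) - q (n + 1) * a n)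
    (hb : ∀ n, p (n + 1) * b (n + 2) = (θ - r (n + 1)) * b (n + 1) - q (n + 1) * b n)
    (hb_pos : ∀ n, 0 < b n) (ha₀ : 0 < a 0)
    (hW₀ : p 0 * casoratian a b 0 = 2 * r 0 * a 0 * b 0) (n : ℕ) :
    0 < a n ∧ 0 ≤ casoratian a b n := by
  induction n with
  | zero =>
    refine ⟨ha₀, nonneg_of_mul_nonneg_right ?_ (hp 0)⟩
    rw [hW₀]
    have := hr 0
    have := hb_pos 0
    positivity
  | succ n ih =>
    obtain ⟨han, hWn⟩ := ih
    have hab : 0 < a (n + 1) * b n := by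
      unfold casoratian at hWn
      linarith [mul_pos han (hb_pos (n + 1))]
    have ha' : 0 < a (n + 1) := pos_of_mul_pos_left hab (hb_pos n).le
    refine ⟨ha', nonneg_of_mul_nonneg_right ?_ (hp (n + 1))⟩
    rw [casoratian_succ n (ha n) (hb n)]
    have := hr (n + 1)
    have := hb_pos (n + 1)
    have := hq n
    positivity

theorem casoratian_pos_of_pos (hp : ∀ n, 0 < p n) (hq : ∀ n, 0 ≤ q (n + 1))
    (ha : ∀ n, p (n + 1) * a (n + 2) = (θ + r (n + 1)) * a (n + 1) - q (n + 1) * a n)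
    (hb : ∀ n, p (n + 1) * b (n + 2) = (θ - r (n + 1)) * b (n + 1) - q (n + 1) * b n)
    (ha_pos : ∀ n, 0 < a n) (hb_pos : ∀ n, 0 < b n) (hW : ∀ n, 0 ≤ casoratian a b n)
    (hW₀ : p 0 * casoratian a b 0 = 2 * r 0 * a 0 * b 0) {j : ℕ} (hj : 0 < r j) :
    0 < casoratian a b j := by
  refine pos_of_mul_pos_right ?_ (hp j).le
  cases j with
  | zero =>
    rw [hW₀]
    have := ha_pos 0
    have := hb_pos 0
    positivity
  | succ n =>
    rw [casoratian_succ n (ha n) (hb n)]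
    have := ha_pos (n + 1)
    have := hb_pos (n + 1)
    have := hq n
    have := hW n
    positivity

theorem div_succ_le_div_iff_casoratian_nonneg {n : ℕ} (han : 0 < a n) (han' : 0 < a (n + 1)) :
    b (n + 1) / a (n + 1) ≤ b n / a n ↔ 0 ≤ casoratian a b n := by
  rw [div_le_div_iff₀ han' han, casoratian, sub_nonneg]
  constructor <;> intro h <;> linarith

theorem div_succ_lt_div_iff_casoratian_pos {n : ℕ} (han : 0 < a n) (han' : 0 < a (n + 1)) :
    b (n + 1) / a (n + 1) < b n / a n ↔ 0 < casoratian a b n := by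
  rw [div_lt_div_iff₀ han' han, casoratian, sub_pos]
  constructor <;> intro h <;> linarith

end Casoratian

theorem Antitone.exists_tendsto_lt {f : ℕ → ℝ} (hf : Antitone f) (hf_bdd : BddBelow (Set.range f))
    {N : ℕ} {c : ℝ} (hN : f N < c) : ∃ l, Tendsto f atTop (nhds l) ∧ l < c :=
  ⟨⨅ n, f n, tendsto_atTop_ciInf hf hf_bdd, (ciInf_le hf_bdd N).trans_lt hN⟩

theorem stmt19_general (p q r : ℕ → ℝ) (Q : ℕ → ℝ → ℝ)
    (hp : ∀ j, 0 < p j) (hq : ∀ j, 0 < q (j + 1)) (hr : ∀ j, 0 ≤ r j)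
    (hQ0 : ∀ x : ℝ, Q 0 x = 1) (hQ1 : ∀ x : ℝ, p 0 * Q 1 x = x - r 0)
    (hQrec : ∀ n : ℕ, ∀ x : ℝ, x * Q (n + 1) x =
      q (n + 1) * Q n x + r (n + 1) * Q (n + 1) x + p (n + 1) * Q (n + 2) x)
    (haper : ∃ j, 0 < r j) (θ : ℝ) (hQθ : ∀ n, 0 < Q n θ) :
    Antitone (fun n : ℕ => |Q n θ / Q n (-θ)|) ∧
      (∀ n : ℕ, |Q n θ / Q n (-θ)| ≤ 1) ∧
      ∃ l : ℝ, Tendsto (fun n : ℕ => |Q n θ / Q n (-θ)|) atTop (nhds l) ∧ l < 1 := by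
  set a : ℕ → ℝ := fun n => (-1) ^ n * Q n (-θ)
  set b : ℕ → ℝ := fun n => Q n θ
  have ha n : p (n + 1) * a (n + 2) = (θ + r (n + 1)) * a (n + 1) - q (n + 1) * a n := by
    linear_combination -(-1 : ℝ) ^ n * hQrec n (-θ)
  have hb n : p (n + 1) * b (n + 2) = (θ - r (n + 1)) * b (n + 1) - q (n + 1) * b n := by
    linear_combination -hQrec n θ
  have hW₀ : p 0 * casoratian a b 0 = 2 * r 0 * a 0 * b 0 := by
    simp only [casoratian, a, b, hQ0, zero_add, pow_zero, pow_one, mul_one]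
    linear_combination -hQ1 θ - hQ1 (-θ)
  have hq' n : 0 ≤ q (n + 1) := (hq n).le
  have hpos := pos_and_casoratian_nonneg hp hq' hr ha hb hQθ (by simp [a, hQ0]) hW₀
  have habs n : |Q n θ / Q n (-θ)| = b n / a n := by
    rw [abs_div, abs_of_pos (hQθ n), ← abs_of_pos (hpos n).1]
    simp [a, b, abs_mul]
  simp only [habs]
  have hanti : Antitone (fun n => b n / a n) := antitone_nat_of_succ_le fun n =>
    (div_succ_le_div_iff_casoratian_nonneg (hpos n).1 (hpos (n + 1)).1).2 (hpos n).2
  have hle_one n : b n / a n ≤ 1 := by simpa [a, b, hQ0] using hanti (Nat.zero_le n)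
  obtain ⟨j, hj⟩ := haper
  have hWj : 0 < casoratian a b j :=
    casoratian_pos_of_pos hp hq' ha hb (fun n => (hpos n).1) hQθ (fun n => (hpos n).2) hW₀ hj
  have hstrict : b (j + 1) / a (j + 1) < 1 :=
    ((div_succ_lt_div_iff_casoratian_pos (hpos j).1 (hpos (j + 1)).1).2 hWj).trans_le (hle_one j)
  have hbdd : BddBelow (Set.range fun n => b n / a n) :=
    ⟨0, by rintro _ ⟨n, rfl⟩; exact div_nonneg (hQθ n).le (hpos n).1.le⟩
  exact ⟨hanti, hle_one, hanti.exists_tendsto_lt hbdd hstrict⟩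

theorem stmt19 (p q r : ℕ → ℝ) (Q : ℕ → ℝ → ℝ)
    (hp : ∀ j, 0 < p j) (hq : ∀ j, 0 < q (j + 1)) (hr : ∀ j, 0 ≤ r j)
    (hq0 : q 0 = 0) (hs : ∀ j, p j + q j + r j = 1)
    (hQ0 : ∀ x : ℝ, Q 0 x = 1) (hQ1 : ∀ x : ℝ, p 0 * Q 1 x = x - r 0)
    (hQrec : ∀ n : ℕ, ∀ x : ℝ, x * Q (n + 1) x =
      q (n + 1) * Q n x + r (n + 1) * Q (n + 1) x + p (n + 1) * Q (n + 2) x)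
    (haper : ∃ j, 0 < r j) (θ : ℝ) (hθ : 1 ≤ θ) (hQθ : ∀ n, 0 < Q n θ) :
    Antitone (fun n : ℕ => |Q n θ / Q n (-θ)|) ∧
      (∀ n : ℕ, |Q n θ / Q n (-θ)| ≤ 1) ∧
      ∃ l : ℝ, Tendsto (fun n : ℕ => |Q n θ / Q n (-θ)|) atTop (nhds l) ∧ l < 1 :=
  stmt19_general p q r Q hp hq hr hQ0 hQ1 hQrec haper θ hQθ
end
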